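/- Let $\gamma$ be a capacity on an algebra $\mathcal{A}$ and $P$ a finitely additive probability on $\mathcal{A}$ such that for sequences $(A_n)$ in $\mathcal{A}$: $P(A_n) \to 0$ if and only if $\gamma(A_n) \to 0$. Then $\gamma$ satisfies the following partition property: for every $B \in \mathcal{A}$ with $\gamma(B) > 0$ there exists $N \in \mathbb{N}$ such that every partition of $\Omega$ into at least $N$ sets from $\mathcal{A}$ contains a set $A$ with $\gamma(B \setminus A) > \gamma(A)$. -/

import Mathlib

open Filter

/-- An algebra of subsets of `Ω`. -/
structure SetAlgebra (Ω : Type*) where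
  sets : Set (Set Ω)
  empty_mem : ∅ ∈ sets
  compl_mem : ∀ A ∈ sets, Aᶜ ∈ sets
  union_mem : ∀ A ∈ sets, ∀ B ∈ sets, A ∪ B ∈ sets

/-- A finitely additive probability on an algebra of sets. -/
structure FinAddProb {Ω : Type*} (𝒜 : SetAlgebra Ω) where
  toFun : Set Ω → ℝ
  nonneg : ∀ A, 0 ≤ toFun A
  empty : toFun ∅ = 0
  univ : toFun Set.univ = 1
  mono : ∀ A ∈ 𝒜.sets, ∀ B ∈ 𝒜.sets, A ⊆ B → toFun A ≤ toFun B
  additive : ∀ A ∈ 𝒜.sets, ∀ B ∈ 𝒜.sets, Disjoint A B → toFun (A ∪ B) = toFun A + toFun B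

/-!
Suppose the partition property fails for `B`. Then there are partitions of `Ω` of every size
all of whose blocks `A` satisfy `γ (B \ A) ≤ γ A`, and since `P` is additive, a partition into
at least `n + 1` blocks has a block `Aₙ` with `P Aₙ ≤ 1 / (n + 1)`. Transferring null sequences
back and forth, `P Aₙ → 0` gives `γ Aₙ → 0`, hence `γ (B \ Aₙ) → 0`, hence `P (B \ Aₙ) → 0`;
so `P B ≤ P (B \ Aₙ) + P Aₙ → 0`, and the constant sequence `B` is `P`-null, hence `γ`-null,
contradicting `γ B > 0`.
-/

open Finset

namespace SetAlgebra

variable {Ω : Type*} (𝒜 : SetAlgebra Ω) {A B : Set Ω}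

theorem inter_mem (hA : A ∈ 𝒜.sets) (hB : B ∈ 𝒜.sets) : A ∩ B ∈ 𝒜.sets := by
  simpa using 𝒜.compl_mem _ (𝒜.union_mem _ (𝒜.compl_mem _ hA) _ (𝒜.compl_mem _ hB))

theorem sdiff_mem (hA : A ∈ 𝒜.sets) (hB : B ∈ 𝒜.sets) : A \ B ∈ 𝒜.sets :=
  𝒜.inter_mem hA (𝒜.compl_mem _ hB)

theorem biUnion_mem (π : Finset (Set Ω)) (hπ : ∀ A ∈ π, A ∈ 𝒜.sets) :
    (⋃ A ∈ π, A) ∈ 𝒜.sets := by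
  classical
  induction π using Finset.induction_on with
  | empty => simpa using 𝒜.empty_mem
  | insert a π _ ih =>
    rw [Finset.set_biUnion_insert]
    exact 𝒜.union_mem _ (hπ a (mem_insert_self a π)) _
      (ih fun A hA => hπ A (mem_insert_of_mem hA))

end SetAlgebra

namespace FinAddProb

variable {Ω : Type*} {𝒜 : SetAlgebra Ω} (P : FinAddProb 𝒜)

theorem apply_biUnion (π : Finset (Set Ω)) (hπ : ∀ A ∈ π, A ∈ 𝒜.sets)
    (hdisj : (π : Set (Set Ω)).Pairwise Disjoint) :
    P.toFun (⋃ A ∈ π, A) = ∑ A ∈ π, P.toFun A := by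
  classical
  induction π using Finset.induction_on with
  | empty => simpa using P.empty
  | insert a π ha ih =>
    have hπ' : ∀ A ∈ π, A ∈ 𝒜.sets := fun A hA => hπ A (mem_insert_of_mem hA)
    rw [coe_insert, Set.pairwise_insert] at hdisj
    have hdisj_a : Disjoint a (⋃ A ∈ π, A) :=
      Set.disjoint_iUnion₂_right.2 fun A hA => (hdisj.2 A hA (ne_of_mem_of_not_mem hA ha).symm).1
    rw [Finset.set_biUnion_insert, P.additive _ (hπ a (mem_insert_self a π)) _
      (𝒜.biUnion_mem π hπ') hdisj_a, ih hπ' hdisj.1, sum_insert ha]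

theorem exists_apply_le_inv_card_of_partition (π : Finset (Set Ω)) (hπ : ∀ A ∈ π, A ∈ 𝒜.sets)
    (hdisj : (π : Set (Set Ω)).Pairwise Disjoint) (hcover : (⋃ A ∈ π, A) = Set.univ)
    (hne : π.Nonempty) : ∃ A ∈ π, P.toFun A ≤ (#π : ℝ)⁻¹ := by
  refine exists_le_of_sum_le hne ?_
  have hcard : (#π : ℝ) ≠ 0 := by exact_mod_cast hne.card_pos.ne'
  rw [← P.apply_biUnion π hπ hdisj, hcover, P.univ, sum_const, nsmul_eq_mul, mul_inv_cancel₀ hcard]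

theorem apply_le_apply_sdiff_add {A B : Set Ω} (hA : A ∈ 𝒜.sets) (hB : B ∈ 𝒜.sets) :
    P.toFun B ≤ P.toFun (B \ A) + P.toFun A := by
  have hsplit := P.additive _ (𝒜.sdiff_mem hB hA) _ (𝒜.inter_mem hB hA)
    (Set.disjoint_sdiff_left.mono_right Set.inter_subset_right)
  rw [Set.sdiff_union_inter] at hsplit
  linarith [P.mono _ (𝒜.inter_mem hB hA) _ hA Set.inter_subset_right]

theorem apply_eq_zero_of_tendsto {A : ℕ → Set Ω} {B : Set Ω} (hA : ∀ n, A n ∈ 𝒜.sets)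
    (hB : B ∈ 𝒜.sets) (hPA : Tendsto (fun n => P.toFun (A n)) atTop (nhds 0))
    (hPBA : Tendsto (fun n => P.toFun (B \ A n)) atTop (nhds 0)) : P.toFun B = 0 := by
  refine le_antisymm ?_ (P.nonneg B)
  simpa using ge_of_tendsto' (hPBA.add hPA) fun n => P.apply_le_apply_sdiff_add (hA n) hB

end FinAddProb

def SameNullSequences {Ω : Type*} {𝒜 : SetAlgebra Ω} (P : FinAddProb 𝒜) (γ : Set Ω → ℝ) : Prop :=
  ∀ A : ℕ → Set Ω, (∀ n, A n ∈ 𝒜.sets) →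
    (Tendsto (fun n => P.toFun (A n)) atTop (nhds 0) ↔ Tendsto (fun n => γ (A n)) atTop (nhds 0))

namespace SameNullSequences

variable {Ω : Type*} {𝒜 : SetAlgebra Ω} {P : FinAddProb 𝒜} {γ : Set Ω → ℝ}

theorem eq_zero_of_apply_eq_zero (h : SameNullSequences P γ) {B : Set Ω} (hB : B ∈ 𝒜.sets)
    (hPB : P.toFun B = 0) : γ B = 0 := by
  have hγB := (h (fun _ => B) fun _ => hB).1 (by simp [hPB])
  exact tendsto_nhds_unique tendsto_const_nhds hγB

theorem apply_eq_zero_of_sdiff_le (h : SameNullSequences P γ) (hγ0 : γ ∅ = 0)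
    (hmono : ∀ A ∈ 𝒜.sets, ∀ B ∈ 𝒜.sets, A ⊆ B → γ A ≤ γ B)
    {A : ℕ → Set Ω} {B : Set Ω} (hA : ∀ n, A n ∈ 𝒜.sets) (hB : B ∈ 𝒜.sets)
    (hPA : Tendsto (fun n => P.toFun (A n)) atTop (nhds 0))
    (hle : ∀ n, γ (B \ A n) ≤ γ (A n)) : P.toFun B = 0 := by
  have hBA : ∀ n, B \ A n ∈ 𝒜.sets := fun n => 𝒜.sdiff_mem hB (hA n)
  have hγA := (h A hA).1 hPA
  have hγBA : Tendsto (fun n => γ (B \ A n)) atTop (nhds 0) :=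
    squeeze_zero (fun n => hγ0 ▸ hmono ∅ 𝒜.empty_mem _ (hBA n) (Set.empty_subset _)) hle hγA
  exact P.apply_eq_zero_of_tendsto hA hB hPA ((h _ hBA).2 hγBA)

end SameNullSequences

theorem partition_property_of_control_general {Ω : Type*} (𝒜 : SetAlgebra Ω)
    (γ : Set Ω → ℝ) (hγ0 : γ ∅ = 0)
    (hmono : ∀ A ∈ 𝒜.sets, ∀ B ∈ 𝒜.sets, A ⊆ B → γ A ≤ γ B)
    (P : FinAddProb 𝒜)
    (hcontrol : ∀ A : ℕ → Set Ω, (∀ n, A n ∈ 𝒜.sets) →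
      (Tendsto (fun n => P.toFun (A n)) atTop (nhds 0) ↔
        Tendsto (fun n => γ (A n)) atTop (nhds 0))) :
    ∀ B ∈ 𝒜.sets, 0 < γ B →
      ∃ N : ℕ, ∀ π : Finset (Set Ω),
        (∀ A ∈ π, A ∈ 𝒜.sets) →
        (∀ A ∈ π, ∀ A' ∈ π, A ≠ A' → Disjoint A A') →
        (⋃ A ∈ π, A) = Set.univ →
        N ≤ π.card →
        ∃ A ∈ π, γ A < γ (B \ A) := by
  intro B hB hγB
  by_contra! hbad
  have hsmall : ∀ n : ℕ, ∃ A ∈ 𝒜.sets, P.toFun A ≤ 1 / ((n : ℝ) + 1) ∧ γ (B \ A) ≤ γ A := by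
    intro n
    obtain ⟨π, hπ, hdisj, hcover, hcard, hle⟩ := hbad (n + 1)
    obtain ⟨A, hAπ, hPA⟩ := P.exists_apply_le_inv_card_of_partition π hπ
      (fun A hA A' hA' hne => hdisj A hA A' hA' hne) hcover (card_pos.1 (by omega))
    refine ⟨A, hπ A hAπ, hPA.trans ?_, hle A hAπ⟩
    rw [one_div]
    exact inv_anti₀ (by positivity) (by exact_mod_cast hcard)
  choose A hA hPA hle using hsmall
  have hPA_tendsto : Tendsto (fun n => P.toFun (A n)) atTop (nhds 0) :=
    squeeze_zero (fun n => P.nonneg _) hPA tendsto_one_div_add_atTop_nhds_zero_nat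
  have hPB := SameNullSequences.apply_eq_zero_of_sdiff_le hcontrol hγ0 hmono hA hB hPA_tendsto hle
  exact hγB.ne' (SameNullSequences.eq_zero_of_apply_eq_zero hcontrol hB hPB)

/-- If the `γ`-null sequences coincide with the `P`-null sequences for a
finitely additive probability `P`, then `γ` satisfies the partition property: for every
`B ∈ 𝒜` with `γ B > 0` there is `N` such that every `𝒜`-measurable partition of `Ω` of
size at least `N` contains a set `A` with `γ (B \ A) > γ A`. -/
theorem partition_property_of_control {Ω : Type*} (𝒜 : SetAlgebra Ω)
    (γ : Set Ω → ℝ) (hγ0 : γ ∅ = 0) (hγ1 : γ Set.univ = 1)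
    (hmono : ∀ A ∈ 𝒜.sets, ∀ B ∈ 𝒜.sets, A ⊆ B → γ A ≤ γ B)
    (P : FinAddProb 𝒜)
    (hcontrol : ∀ A : ℕ → Set Ω, (∀ n, A n ∈ 𝒜.sets) →
      (Tendsto (fun n => P.toFun (A n)) atTop (nhds 0) ↔
        Tendsto (fun n => γ (A n)) atTop (nhds 0))) :
    ∀ B ∈ 𝒜.sets, 0 < γ B →
      ∃ N : ℕ, ∀ π : Finset (Set Ω),
        (∀ A ∈ π, A ∈ 𝒜.sets) →
        (∀ A ∈ π, ∀ A' ∈ π, A ≠ A' → Disjoint A A') →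
        (⋃ A ∈ π, A) = Set.univ →
        N ≤ π.card →
        ∃ A ∈ π, γ A < γ (B \ A) :=
  partition_property_of_control_general 𝒜 γ hγ0 hmono P hcontrol
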